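/- Let m₁ ≥ m₂, let α be an m₂×m₁ complex matrix with αα* = I_{m₂}, let c = 1/2, and define β(x) = [e^{icx}α, e^{−icx}I_{m₂}] (an m₂×m matrix function, m = m₁+m₂). Then β satisfies conditions (1.4); the Hamiltonian H(x) = β(x)*β(x) equals e^{−icxj} 𝒦 e^{icxj}, where 𝒦 is the m×m block matrix [[α*α, α*],[α, I_{m₂}]]; and the matrix function W(x,λ) := e^{−icxj} · exp( i x (λ j 𝒦 + c j) ) satisfies W(0,λ) = I_m and ∂W/∂x (x,λ) = iλ j H(x) W(x,λ) for all x ≥ 0 and λ ∈ ℂ, i.e., W is the normalised fundamental solution of the generalised canonical system with Hamiltonian H. -/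

import Mathlib

open MeasureTheory Set Filter Complex Matrix

noncomputable section

/-- The signature matrix `j = diag(I_{m₁}, -I_{m₂})`. -/
def sigJ (m₁ m₂ : ℕ) : Matrix (Fin m₁ ⊕ Fin m₂) (Fin m₁ ⊕ Fin m₂) ℂ :=
  Matrix.fromBlocks 1 0 0 (-1)

/-- The matrix function `β(x) = [e^{icx}α, e^{-icx}I_{m₂}]` with `c = 1/2`. -/
def βex {m₁ m₂ : ℕ} (α : Matrix (Fin m₂) (Fin m₁) ℂ) (x : ℝ) :
    Matrix (Fin m₂) (Fin m₁ ⊕ Fin m₂) ℂ :=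
  Matrix.of fun i s =>
    Sum.casesOn s
      (fun a => Complex.exp (Complex.I * (1/2) * (x : ℂ)) * α i a)
      (fun b => Complex.exp (-(Complex.I * (1/2) * (x : ℂ))) * if i = b then (1:ℂ) else 0)

/-- The block matrix `𝒦 = [[α*α, α*],[α, I]]`. -/
def Kex {m₁ m₂ : ℕ} (α : Matrix (Fin m₂) (Fin m₁) ℂ) :
    Matrix (Fin m₁ ⊕ Fin m₂) (Fin m₁ ⊕ Fin m₂) ℂ :=
  Matrix.fromBlocks (αᴴ * α) αᴴ α 1

/-- The candidate fundamental solution `W(x,λ) = e^{-icxj} exp(ix(λj𝒦 + cj))`, `c = 1/2`. -/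
def Wex {m₁ m₂ : ℕ} (α : Matrix (Fin m₂) (Fin m₁) ℂ) (x : ℝ) (lam : ℂ) :
    Matrix (Fin m₁ ⊕ Fin m₂) (Fin m₁ ⊕ Fin m₂) ℂ :=
  NormedSpace.exp ((-(Complex.I * (1/2) * (x : ℂ))) • sigJ m₁ m₂) *
    NormedSpace.exp ((Complex.I * (x : ℂ)) •
      (lam • (sigJ m₁ m₂ * Kex α) + ((1:ℂ)/2) • sigJ m₁ m₂))

/-!
Put `u = e^{ix/2}`, so `|u| = 1` and `β(x) = [u α, ū I]`. Then `β j β* = |u|² (α α* - I) = 0`.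
Differentiating the phases multiplies the two block columns by `±i/2`, i.e. `β' = (i/2) β j`;
as `j² = I`, this gives `β' j β* = (i/2) β β* = (i/2) · 2 I`. Block multiplication shows
`β* β = e^{-icxj} 𝒦 e^{icxj}`. Finally `W(x) = e^{xA} e^{xB}` with `A = -icj` and
`B = i(λ j 𝒦 + c j)`, so `W' = e^{xA} (A + B) e^{xB} = iλ e^{-icxj} j 𝒦 e^{xB}`, and since `j`
commutes with `e^{-icxj}` this is `iλ j H W`.
-/

section ExpProduct

variable {𝕂 𝔸 : Type*} [RCLike 𝕂] [NormedRing 𝔸] [NormedAlgebra 𝕂 𝔸] [CompleteSpace 𝔸]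

theorem hasDerivAt_exp_smul_mul_exp_smul (A B : 𝔸) (t : 𝕂) :
    HasDerivAt (fun u : 𝕂 => NormedSpace.exp (u • A) * NormedSpace.exp (u • B))
      (NormedSpace.exp (t • A) * (A + B) * NormedSpace.exp (t • B)) t := by
  have hA : Commute (NormedSpace.exp (t • A)) A := ((Commute.refl A).smul_left t).exp_left
  convert (hasDerivAt_exp_smul_const' A t).fun_mul (hasDerivAt_exp_smul_const' B t) using 1
  rw [← hA.eq, mul_add, add_mul, mul_assoc, mul_assoc]

end ExpProduct

theorem Matrix.hasDerivAt_exp_smul_mul_exp_smul_apply {n 𝕂 : Type*} [Fintype n] [DecidableEq n]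
    [RCLike 𝕂] (A B : Matrix n n 𝕂) (t : ℝ) (i k : n) :
    HasDerivAt (fun u : ℝ => (NormedSpace.exp (u • A) * NormedSpace.exp (u • B)) i k)
      ((NormedSpace.exp (t • A) * (A + B) * NormedSpace.exp (t • B)) i k) t := by
  -- matrices carry no canonical norm; this one is auxiliary, as the claim concerns entries only
  let _ := Matrix.linftyOpNormedRing (n := n) (α := 𝕂)
  let _ := Matrix.linftyOpNormedAlgebra (n := n) (R := ℝ) (α := 𝕂)
  exact (entryLinearMap ℝ 𝕂 i k).toContinuousLinearMap.hasFDerivAt.comp_hasDerivAt t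
    (hasDerivAt_exp_smul_mul_exp_smul A B t)

theorem hasDerivAt_cexp_mul_ofReal (c : ℂ) (x : ℝ) :
    HasDerivAt (fun y : ℝ => cexp (c * y)) (c * cexp (c * x)) x := by
  simpa [mul_comm] using (((hasDerivAt_id (x : ℂ)).const_mul c).cexp).comp_ofReal

theorem star_cexp_I_half_mul (x : ℝ) :
    star (cexp (I * (1/2) * x)) = cexp (-(I * (1/2) * x)) := by
  rw [Complex.star_def, ← Complex.exp_conj]
  simp [map_ofNat]

theorem cexp_I_half_mul_mul_star (x : ℝ) :
    cexp (I * (1/2) * x) * star (cexp (I * (1/2) * x)) = 1 := by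
  rw [star_cexp_I_half_mul, ← Complex.exp_add, add_neg_cancel, Complex.exp_zero]

section Signature

variable (m₁ m₂ : ℕ)

theorem sigJ_mul_self : sigJ m₁ m₂ * sigJ m₁ m₂ = 1 := by
  simp [sigJ, fromBlocks_multiply]

theorem exp_smul_sigJ (z : ℂ) :
    NormedSpace.exp (z • sigJ m₁ m₂) = fromBlocks (cexp z • 1) 0 0 (cexp (-z) • 1) := by
  simp only [sigJ, fromBlocks_smul, smul_zero, smul_neg, smul_one_eq_diagonal, diagonal_neg]
  rw [fromBlocks_diagonal, fromBlocks_diagonal, exp_diagonal]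
  congr 1
  ext (_ | _) <;> simp [Complex.exp_eq_exp_ℂ]

theorem commute_sigJ_exp_smul_sigJ (z : ℂ) :
    Commute (sigJ m₁ m₂) (NormedSpace.exp (z • sigJ m₁ m₂)) :=
  ((Commute.refl _).smul_right z).exp_right

theorem exp_smul_sigJ_mul_exp_neg_smul_sigJ (z : ℂ) :
    NormedSpace.exp (z • sigJ m₁ m₂) * NormedSpace.exp ((-z) • sigJ m₁ m₂) = 1 := by
  rw [← Matrix.exp_add_of_commute _ _ (((Commute.refl _).smul_left z).smul_right (-z)),
    ← add_smul, add_neg_cancel, zero_smul, NormedSpace.exp_zero]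

variable {m₁ m₂}

theorem fromCols_mul_sigJ_mul_conjTranspose {k l : ℕ} (A : Matrix (Fin k) (Fin m₁) ℂ)
    (B : Matrix (Fin k) (Fin m₂) ℂ) (C : Matrix (Fin l) (Fin m₁) ℂ)
    (D : Matrix (Fin l) (Fin m₂) ℂ) :
    fromCols A B * sigJ m₁ m₂ * (fromCols C D)ᴴ = A * Cᴴ - B * Dᴴ := by
  simp [sigJ, fromCols_mul_fromBlocks, conjTranspose_fromCols_eq_fromRows_conjTranspose,
    fromCols_mul_fromRows, sub_eq_add_neg]

end Signature

section Beta

variable {m₁ m₂ : ℕ} (α : Matrix (Fin m₂) (Fin m₁) ℂ)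

theorem βex_eq_fromCols (x : ℝ) :
    βex α x = fromCols (cexp (I * (1/2) * x) • α) (star (cexp (I * (1/2) * x)) • 1) := by
  rw [star_cexp_I_half_mul]
  ext i (a | b) <;> simp [βex, one_apply]

theorem βex_mul_sigJ (x : ℝ) :
    βex α x * sigJ m₁ m₂
      = fromCols (cexp (I * (1/2) * x) • α) (-(star (cexp (I * (1/2) * x)) • 1)) := by
  simp [βex_eq_fromCols, sigJ, fromCols_mul_fromBlocks]

def βexDeriv (x : ℝ) : Matrix (Fin m₂) (Fin m₁ ⊕ Fin m₂) ℂ :=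
  (I * (1/2)) • (βex α x * sigJ m₁ m₂)

theorem hasDerivAt_βex_apply (x : ℝ) (i : Fin m₂) (s : Fin m₁ ⊕ Fin m₂) :
    HasDerivAt (fun y : ℝ => βex α y i s) (βexDeriv α x i s) x := by
  rw [βexDeriv, Matrix.smul_apply, βex_mul_sigJ, star_cexp_I_half_mul]
  rcases s with a | b
  · simpa [βex, ← mul_assoc] using (hasDerivAt_cexp_mul_ofReal (I * (1/2)) x).mul_const (α i a)
  · simpa [βex, one_apply, ← mul_assoc, neg_ite] using
      (hasDerivAt_cexp_mul_ofReal (-(I * (1/2))) x).mul_const (if i = b then (1 : ℂ) else 0)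

theorem conjTranspose_βex_mul_βex (x : ℝ) :
    (βex α x)ᴴ * βex α x
      = NormedSpace.exp ((-(I * (1/2) * (x : ℂ))) • sigJ m₁ m₂) * Kex α *
          NormedSpace.exp ((I * (1/2) * (x : ℂ)) • sigJ m₁ m₂) := by
  rw [exp_smul_sigJ, exp_smul_sigJ, neg_neg, ← star_cexp_I_half_mul, βex_eq_fromCols,
    conjTranspose_fromCols_eq_fromRows_conjTranspose, fromRows_mul_fromCols, Kex,
    fromBlocks_multiply, fromBlocks_multiply]
  simp

variable {α} (hα : α * αᴴ = 1)
include hα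

theorem βex_mul_sigJ_mul_conjTranspose (x : ℝ) : βex α x * sigJ m₁ m₂ * (βex α x)ᴴ = 0 := by
  simp [βex_eq_fromCols, fromCols_mul_sigJ_mul_conjTranspose, hα, smul_smul, mul_comm]

theorem βex_mul_conjTranspose (x : ℝ) : βex α x * (βex α x)ᴴ = (2 : ℂ) • 1 := by
  rw [βex_eq_fromCols, conjTranspose_fromCols_eq_fromRows_conjTranspose, fromCols_mul_fromRows,
    conjTranspose_smul, conjTranspose_smul]
  simp only [Matrix.smul_mul, Matrix.mul_smul, smul_smul, hα, conjTranspose_one, mul_one, star_star]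
  rw [mul_comm (star _), cexp_I_half_mul_mul_star, one_smul, two_smul]

theorem βexDeriv_mul_sigJ_mul_conjTranspose (x : ℝ) :
    βexDeriv α x * sigJ m₁ m₂ * (βex α x)ᴴ = I • 1 := by
  rw [βexDeriv, Matrix.smul_mul, Matrix.smul_mul, Matrix.mul_assoc (βex α x), sigJ_mul_self,
    Matrix.mul_one, βex_mul_conjTranspose hα, smul_smul]
  congr 1
  ring

end Beta

section FundamentalSolution

variable {m₁ m₂ : ℕ} (α : Matrix (Fin m₂) (Fin m₁) ℂ) (lam : ℂ)

theorem Wex_zero : Wex α 0 lam = 1 := by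
  simp [Wex]

theorem hasDerivAt_Wex_apply (x : ℝ) (i k : Fin m₁ ⊕ Fin m₂) :
    HasDerivAt (fun y : ℝ => Wex α y lam i k)
      ((I * lam) * (sigJ m₁ m₂ * ((βex α x)ᴴ * βex α x) * Wex α x lam) i k) x := by
  set J := sigJ m₁ m₂
  set A : Matrix (Fin m₁ ⊕ Fin m₂) (Fin m₁ ⊕ Fin m₂) ℂ := (-(I * (1/2))) • J
  set B : Matrix (Fin m₁ ⊕ Fin m₂) (Fin m₁ ⊕ Fin m₂) ℂ := I • (lam • (J * Kex α) + (1/2 : ℂ) • J)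
  have hA (y : ℝ) : y • A = (-(I * (1/2) * y)) • J := by
    rw [← Complex.coe_smul, smul_smul]
    ring_nf
  have hB (y : ℝ) : y • B = (I * y) • (lam • (J * Kex α) + (1/2 : ℂ) • J) := by
    rw [← Complex.coe_smul, smul_smul, mul_comm]
  have hW (y : ℝ) : Wex α y lam = NormedSpace.exp (y • A) * NormedSpace.exp (y • B) := by
    rw [hA, hB, Wex]
  have hAB : A + B = (I * lam) • (J * Kex α) := by
    simp only [A, B, smul_add, smul_smul, neg_smul]
    abel
  set P := NormedSpace.exp ((-(I * (1/2) * x)) • J)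
  set E := NormedSpace.exp (x • B)
  have hQP : NormedSpace.exp ((I * (1/2) * x) • J) * P = 1 :=
    exp_smul_sigJ_mul_exp_neg_smul_sigJ m₁ m₂ _
  have hJP : Commute J P := commute_sigJ_exp_smul_sigJ m₁ m₂ _
  have hval : NormedSpace.exp (x • A) * (A + B) * E
      = (I * lam) • (J * ((βex α x)ᴴ * βex α x) * Wex α x lam) := by
    calc NormedSpace.exp (x • A) * (A + B) * E = (I * lam) • (P * (J * Kex α) * E) := by
          rw [hA, hAB, Matrix.mul_smul, Matrix.smul_mul]
      _ = (I * lam) • (J * P * Kex α * (NormedSpace.exp ((I * (1/2) * x) • J) * P) * E) := by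
          rw [hQP, Matrix.mul_one, hJP.eq]
          simp only [Matrix.mul_assoc]
      _ = (I * lam) • (J * ((βex α x)ᴴ * βex α x) * Wex α x lam) := by
          rw [conjTranspose_βex_mul_βex, hW, hA]
          simp only [Matrix.mul_assoc]
          rfl
  have hderiv := Matrix.hasDerivAt_exp_smul_mul_exp_smul_apply A B x i k
  rw [hval] at hderiv
  simpa only [hW, Matrix.smul_apply, smul_eq_mul] using hderiv

end FundamentalSolution

theorem statement18_general {m₁ m₂ : ℕ}
    (α : Matrix (Fin m₂) (Fin m₁) ℂ) (hα : α * αᴴ = 1) :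
    (∃ β' : ℝ → Matrix (Fin m₂) (Fin m₁ ⊕ Fin m₂) ℂ,
      (∀ (x : ℝ) (i : Fin m₂) (s : Fin m₁ ⊕ Fin m₂),
        HasDerivAt (fun y : ℝ => βex α y i s) (β' x i s) x) ∧
      (∀ x : ℝ, 0 ≤ x →
        βex α x * sigJ m₁ m₂ * (βex α x)ᴴ = 0 ∧
        β' x * sigJ m₁ m₂ * (βex α x)ᴴ
          = Complex.I • (1 : Matrix (Fin m₂) (Fin m₂) ℂ))) ∧
    (∀ x : ℝ, 0 ≤ x →
      (βex α x)ᴴ * βex α x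
        = NormedSpace.exp ((-(Complex.I * (1/2) * (x : ℂ))) • sigJ m₁ m₂) * Kex α *
            NormedSpace.exp ((Complex.I * (1/2) * (x : ℂ)) • sigJ m₁ m₂)) ∧
    (∀ lam : ℂ, Wex α 0 lam = 1) ∧
    (∀ (lam : ℂ) (x : ℝ), 0 ≤ x → ∀ i k,
      HasDerivAt (fun y : ℝ => Wex α y lam i k)
        ((Complex.I * lam) *
          (sigJ m₁ m₂ * ((βex α x)ᴴ * βex α x) * Wex α x lam) i k) x) :=
  ⟨⟨βexDeriv α, hasDerivAt_βex_apply α,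
      fun x _ => ⟨βex_mul_sigJ_mul_conjTranspose hα x, βexDeriv_mul_sigJ_mul_conjTranspose hα x⟩⟩,
    fun x _ => conjTranspose_βex_mul_βex α x,
    Wex_zero α,
    fun lam x _ => hasDerivAt_Wex_apply α lam x⟩

/-- Example 2.3: `β` satisfies (1.4), the Hamiltonian
`H = β*β` equals `e^{-icxj}𝒦e^{icxj}`, and `W(x,λ) = e^{-icxj}e^{ix(λj𝒦+cj)}` is
the normalised fundamental solution of the generalised canonical system. -/
theorem statement18 {m₁ m₂ : ℕ} (hm : m₂ ≤ m₁)
    (α : Matrix (Fin m₂) (Fin m₁) ℂ) (hα : α * αᴴ = 1) :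
    (∃ β' : ℝ → Matrix (Fin m₂) (Fin m₁ ⊕ Fin m₂) ℂ,
      (∀ (x : ℝ) (i : Fin m₂) (s : Fin m₁ ⊕ Fin m₂),
        HasDerivAt (fun y : ℝ => βex α y i s) (β' x i s) x) ∧
      (∀ x : ℝ, 0 ≤ x →
        βex α x * sigJ m₁ m₂ * (βex α x)ᴴ = 0 ∧
        β' x * sigJ m₁ m₂ * (βex α x)ᴴ
          = Complex.I • (1 : Matrix (Fin m₂) (Fin m₂) ℂ))) ∧
    (∀ x : ℝ, 0 ≤ x →
      (βex α x)ᴴ * βex α x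
        = NormedSpace.exp ((-(Complex.I * (1/2) * (x : ℂ))) • sigJ m₁ m₂) * Kex α *
            NormedSpace.exp ((Complex.I * (1/2) * (x : ℂ)) • sigJ m₁ m₂)) ∧
    (∀ lam : ℂ, Wex α 0 lam = 1) ∧
    (∀ (lam : ℂ) (x : ℝ), 0 ≤ x → ∀ i k,
      HasDerivAt (fun y : ℝ => Wex α y lam i k)
        ((Complex.I * lam) *
          (sigJ m₁ m₂ * ((βex α x)ᴴ * βex α x) * Wex α x lam) i k) x) :=
  statement18_general α hα
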